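/- Let Z0, Z1 be real-valued random variables with CDFs F_{Z0}, F_{Z1}, let μ be a Borel probability measure on ℝ, and let c : [0,1]² → ℝ be continuous. Let {r_s}_{s>0} be a family of continuous, nondecreasing, globally Lipschitz functions ℝ → ℝ with limits 0 at −∞ and 1 at +∞, such that lim_{s→∞} r_s(z) = H(z) = 1_{z>0} for all z ∈ ℝ. Then, with F_{Z_k}^{(s)}(t) := 1 − E[r_s(Z_k − t)], one has ∫ c(F_{Z0}(t), F_{Z1}(t)) μ(dt) = lim_{s→∞} ∫ c(F_{Z0}^{(s)}(t), F_{Z1}^{(s)}(t)) μ(dt). -/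

import Mathlib

/-!
The relaxed CDF `1 - E[r_s(Z - t)]` converges pointwise to the CDF of `Z` by dominated
convergence in `ω`, since `r_s(Z - t) → 1_{Z > t}` and `0 ≤ r_s ≤ 1`. Both relaxed CDFs take
values in the compact square `[0,1]²`, on which `c` is bounded and continuous, so a second
dominated convergence in `t` gives the claim. Measurability in `t` comes for free: a relaxed
CDF is monotone in `t`.
-/

open MeasureTheory Set Filter Topology

theorem tendsto_integral_comp_of_continuousOn {α E ι : Type*} [MeasurableSpace α]
    {μ : Measure α} [IsFiniteMeasure μ] [TopologicalSpace E] [MeasurableSpace E]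
    [OpensMeasurableSpace E] {K : Set E} (hK : IsCompact K) {c : E → ℝ} (hc : ContinuousOn c K)
    {l : Filter ι} [l.IsCountablyGenerated] {g : ι → α → E} {g₀ : α → E}
    (hg : ∀ᶠ i in l, Measurable (g i)) (hgK : ∀ᶠ i in l, ∀ x, g i x ∈ K)
    (hg₀K : ∀ x, g₀ x ∈ K) (hlim : ∀ x, Tendsto (fun i => g i x) l (𝓝 (g₀ x))) :
    Tendsto (fun i => ∫ x, c (g i x) ∂μ) l (𝓝 (∫ x, c (g₀ x) ∂μ)) := by
  obtain ⟨M, hM⟩ := hK.exists_bound_of_continuousOn hc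
  refine tendsto_integral_filter_of_dominated_convergence (fun _ => M) ?_ ?_
    (integrable_const M) (Eventually.of_forall fun x => ?_)
  · filter_upwards [hg, hgK] with i hgi hgiK
    exact (hc.domRestrict.measurable.comp (hgi.subtype_mk (h := hgiK))).aestronglyMeasurable
  · filter_upwards [hgK] with i hgiK
    exact Eventually.of_forall fun x => hM _ (hgiK x)
  · exact (hc _ (hg₀K x)).tendsto.comp (tendsto_nhdsWithin_iff.2 ⟨hlim x, by
      filter_upwards [hgK] with i hgiK using hgiK x⟩)

section RelaxedCDF

variable {Ω : Type*} [MeasurableSpace Ω] {P : Measure Ω} {Z : Ω → ℝ} {ρ : ℝ → ℝ}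

/-- The paper's `F_Z^{(s)}` for `ρ = r_s`; for `ρ = H` it is the CDF of `Z`. -/
noncomputable def relaxedCDF (P : Measure Ω) (Z : Ω → ℝ) (ρ : ℝ → ℝ) (t : ℝ) : ℝ :=
  1 - ∫ ω, ρ (Z ω - t) ∂P

theorem integrable_comp_sub [IsFiniteMeasure P] (hZ : Measurable Z) (hρ : Measurable ρ)
    (hρ01 : ∀ x, ρ x ∈ Icc (0 : ℝ) 1) (t : ℝ) : Integrable (fun ω => ρ (Z ω - t)) P :=
  .of_bound (hρ.comp (hZ.sub measurable_const)).aestronglyMeasurable 1 <|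
    Eventually.of_forall fun ω => by
      rw [Real.norm_of_nonneg (hρ01 _).1]
      exact (hρ01 _).2

theorem relaxedCDF_mem_Icc [IsProbabilityMeasure P] (hρ01 : ∀ x, ρ x ∈ Icc (0 : ℝ) 1) (t : ℝ) :
    relaxedCDF P Z ρ t ∈ Icc (0 : ℝ) 1 := by
  have h0 : 0 ≤ ∫ ω, ρ (Z ω - t) ∂P := integral_nonneg fun ω => (hρ01 _).1
  have h1 : ∫ ω, ρ (Z ω - t) ∂P ≤ 1 := by
    simpa using integral_mono_of_nonneg (.of_forall fun ω => (hρ01 _).1)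
      (integrable_const (μ := P) (1 : ℝ)) (.of_forall fun ω => (hρ01 (Z ω - t)).2)
  exact ⟨sub_nonneg.2 h1, sub_le_self 1 h0⟩

theorem monotone_relaxedCDF [IsFiniteMeasure P] (hZ : Measurable Z) (hρ : Monotone ρ)
    (hρ01 : ∀ x, ρ x ∈ Icc (0 : ℝ) 1) : Monotone (relaxedCDF P Z ρ) := fun t t' htt' =>
  sub_le_sub_left (integral_mono (integrable_comp_sub hZ hρ.measurable hρ01 t')
    (integrable_comp_sub hZ hρ.measurable hρ01 t) fun ω => hρ (by linarith)) 1

theorem tendsto_relaxedCDF [IsProbabilityMeasure P] (hZ : Measurable Z) {ι : Type*}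
    {l : Filter ι} [l.IsCountablyGenerated] {ρ : ι → ℝ → ℝ}
    (hρ : ∀ᶠ i in l, Measurable (ρ i)) (hρ01 : ∀ᶠ i in l, ∀ x, ρ i x ∈ Icc (0 : ℝ) 1)
    (hH : ∀ z, Tendsto (fun i => ρ i z) l (𝓝 (if 0 < z then 1 else 0))) (t : ℝ) :
    Tendsto (fun i => relaxedCDF P Z (ρ i) t) l (𝓝 (P.real {ω | Z ω ≤ t})) := by
  have hgt : MeasurableSet {ω | t < Z ω} := measurableSet_lt measurable_const hZ
  have hint : Tendsto (fun i => ∫ ω, ρ i (Z ω - t) ∂P) l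
      (𝓝 (∫ ω, {ω | t < Z ω}.indicator 1 ω ∂P)) := by
    refine tendsto_integral_filter_of_dominated_convergence (fun _ => 1) ?_ ?_
      (integrable_const 1) (Eventually.of_forall fun ω => ?_)
    · filter_upwards [hρ] with i hρi
      exact (hρi.comp (hZ.sub measurable_const)).aestronglyMeasurable
    · filter_upwards [hρ01] with i hρi01
      refine Eventually.of_forall fun ω => ?_
      rw [Real.norm_of_nonneg (hρi01 _).1]
      exact (hρi01 _).2
    · simpa [indicator_apply, sub_pos] using hH (Z ω - t)
  have hcompl : {ω | Z ω ≤ t} = {ω | t < Z ω}ᶜ := by ext; simp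
  rw [integral_indicator_one hgt] at hint
  rw [hcompl, probReal_compl_eq_one_sub hgt]
  exact tendsto_const_nhds.sub hint

end RelaxedCDF

theorem stmt_11_general {Ω : Type*} [MeasurableSpace Ω] (P : MeasureTheory.Measure Ω)
    [MeasureTheory.IsProbabilityMeasure P]
    (Z0 Z1 : Ω → ℝ) (hZ0 : Measurable Z0) (hZ1 : Measurable Z1)
    (μ : MeasureTheory.Measure ℝ) [MeasureTheory.IsProbabilityMeasure μ]
    (c : ℝ → ℝ → ℝ)
    (hc : ContinuousOn (fun p : ℝ × ℝ => c p.1 p.2) (Set.Icc (0 : ℝ) 1 ×ˢ Set.Icc (0 : ℝ) 1))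
    (r : ℝ → ℝ → ℝ)
    (hrmono : ∀ s > (0 : ℝ), Monotone (r s))
    (hbot : ∀ s > (0 : ℝ), Filter.Tendsto (r s) Filter.atBot (nhds 0))
    (htop : ∀ s > (0 : ℝ), Filter.Tendsto (r s) Filter.atTop (nhds 1))
    (hH : ∀ z : ℝ, Filter.Tendsto (fun s => r s z) Filter.atTop
      (nhds (if 0 < z then (1 : ℝ) else 0))) :
    Filter.Tendsto
      (fun s => ∫ t, c (1 - ∫ ω, r s (Z0 ω - t) ∂P) (1 - ∫ ω, r s (Z1 ω - t) ∂P) ∂μ)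
      Filter.atTop
      (nhds (∫ t, c ((P {ω | Z0 ω ≤ t}).toReal) ((P {ω | Z1 ω ≤ t}).toReal) ∂μ)) := by
  have hr01 : ∀ s > (0 : ℝ), ∀ x, r s x ∈ Icc (0 : ℝ) 1 := fun s hs x =>
    ⟨(hrmono s hs).le_of_tendsto (hbot s hs) x, (hrmono s hs).ge_of_tendsto (htop s hs) x⟩
  have hpos := eventually_gt_atTop (0 : ℝ)
  have hr01' : ∀ᶠ s in atTop, ∀ x, r s x ∈ Icc (0 : ℝ) 1 := hpos.mono hr01
  have hrmeas : ∀ᶠ s in atTop, Measurable (r s) := hpos.mono fun s hs => (hrmono s hs).measurable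
  refine tendsto_integral_comp_of_continuousOn (isCompact_Icc.prod isCompact_Icc) hc
    (g := fun s t => (relaxedCDF P Z0 (r s) t, relaxedCDF P Z1 (r s) t)) ?_ ?_
    (fun t => ⟨⟨measureReal_nonneg, measureReal_le_one⟩, ⟨measureReal_nonneg, measureReal_le_one⟩⟩)
    (fun t => (tendsto_relaxedCDF hZ0 hrmeas hr01' hH t).prodMk_nhds
      (tendsto_relaxedCDF hZ1 hrmeas hr01' hH t))
  · filter_upwards [hpos] with s hs
    exact (monotone_relaxedCDF hZ0 (hrmono s hs) (hr01 s hs)).measurable.prodMk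
      (monotone_relaxedCDF hZ1 (hrmono s hs) (hr01 s hs)).measurable
  · filter_upwards [hr01'] with s hs t
    exact ⟨relaxedCDF_mem_Icc hs t, relaxedCDF_mem_Icc hs t⟩

/-- For continuous cost `c` on `[0,1]²` and a relaxation family `r_s`
converging pointwise to `H(z) = 1_{z>0}` everywhere, the relaxed bias
`∫ c(F_{Z0}^{(s)}(t), F_{Z1}^{(s)}(t)) μ(dt)` converges, as `s → ∞`, to
`∫ c(F_{Z0}(t), F_{Z1}(t)) μ(dt)`. -/
theorem stmt_11 {Ω : Type*} [MeasurableSpace Ω] (P : MeasureTheory.Measure Ω)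
    [MeasureTheory.IsProbabilityMeasure P]
    (Z0 Z1 : Ω → ℝ) (hZ0 : Measurable Z0) (hZ1 : Measurable Z1)
    (μ : MeasureTheory.Measure ℝ) [MeasureTheory.IsProbabilityMeasure μ]
    (c : ℝ → ℝ → ℝ)
    (hc : ContinuousOn (fun p : ℝ × ℝ => c p.1 p.2) (Set.Icc (0 : ℝ) 1 ×ˢ Set.Icc (0 : ℝ) 1))
    (r : ℝ → ℝ → ℝ)
    (hrcont : ∀ s > (0 : ℝ), Continuous (r s))
    (hrmono : ∀ s > (0 : ℝ), Monotone (r s))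
    (hrLip : ∀ s > (0 : ℝ), ∃ K : NNReal, LipschitzWith K (r s))
    (hbot : ∀ s > (0 : ℝ), Filter.Tendsto (r s) Filter.atBot (nhds 0))
    (htop : ∀ s > (0 : ℝ), Filter.Tendsto (r s) Filter.atTop (nhds 1))
    (hH : ∀ z : ℝ, Filter.Tendsto (fun s => r s z) Filter.atTop
      (nhds (if 0 < z then (1 : ℝ) else 0))) :
    Filter.Tendsto
      (fun s => ∫ t, c (1 - ∫ ω, r s (Z0 ω - t) ∂P) (1 - ∫ ω, r s (Z1 ω - t) ∂P) ∂μ)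
      Filter.atTop
      (nhds (∫ t, c ((P {ω | Z0 ω ≤ t}).toReal) ((P {ω | Z1 ω ≤ t}).toReal) ∂μ)) :=
  stmt_11_general P Z0 Z1 hZ0 hZ1 μ c hc r hrmono hbot htop hH
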